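/- Let ν^±(λ) = -1 ± √(1+λ). There exist C, δ > 0 and a limiting operator value such that for all λ ∈ B(0,δ) to the right of the parabola {-k²+2ik : k∈ℝ} and all ξ ≥ 0, |ν^-(λ)e^{ν^-(λ)ξ} - ν^-(0)e^{ν^-(0)ξ}| ≤ C|λ|(1+ξ)e^{-ξ}. Here ν^-(0) = -2. -/

import Mathlib

/-- Stable spatial eigenvalue `ν⁻(λ) = -1 - √(1+λ)` of `∂ₓₓ + 2∂ₓ - λ`. -/
noncomputable def nuM (l : ℂ) : ℂ := -1 - (1 + l) ^ ((1:ℂ)/2)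

/-!
With `s = √(1+λ)` on the principal branch, `Re s ≥ 0`, so `Re ν⁻(λ) ≤ -1` and `|s + 1| ≥ 1`;
from `(s - 1)(s + 1) = λ` we get `|ν⁻(λ) + 2| = |s - 1| ≤ |λ|`. Writing
`ν e^{νξ} + 2e^{-2ξ} = (ν + 2) e^{νξ} - 2 (e^{νξ} - e^{-2ξ})` and applying the mean value theorem
to `exp` on the half-plane `Re ≤ -ξ`, which contains both `νξ` and `-2ξ`, gives the estimate with
`C = 2`.
-/

namespace Complex

theorem norm_exp_sub_exp_le_of_re_le {z w : ℂ} {r : ℝ} (hz : z.re ≤ r) (hw : w.re ≤ r) :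
    ‖exp z - exp w‖ ≤ Real.exp r * ‖z - w‖ := by
  have hconv : Convex ℝ {u : ℂ | u.re ≤ r} := convex_halfSpace_le reLm.isLinear r
  refine hconv.norm_image_sub_le_of_norm_deriv_le (fun u _ => differentiableAt_exp)
    (fun u hu => ?_) hw hz
  rw [deriv_exp, norm_exp]
  exact Real.exp_le_exp.2 hu

theorem norm_sub_one_le_norm_sq_sub_one {s : ℂ} (hs : 0 ≤ s.re) : ‖s - 1‖ ≤ ‖s ^ 2 - 1‖ := by
  have h1 : 1 ≤ ‖s + 1‖ := by simpa using (re_le_norm (s + 1)).trans' (by simpa using hs)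
  calc ‖s - 1‖ ≤ ‖s - 1‖ * ‖s + 1‖ := le_mul_of_one_le_right (norm_nonneg _) h1
    _ = ‖s ^ 2 - 1‖ := by rw [← norm_mul]; ring_nf

theorem re_cpow_one_div_two_nonneg (z : ℂ) : 0 ≤ (z ^ ((1:ℂ) / 2)).re := by
  rw [one_div, cpow_inv_two_re]
  exact Real.sqrt_nonneg _

end Complex

open Complex

theorem re_nuM_le (l : ℂ) : (nuM l).re ≤ -1 := by
  have := re_cpow_one_div_two_nonneg (1 + l)
  simp only [nuM, sub_re, neg_re, one_re]
  linarith

theorem norm_nuM_add_two_le (l : ℂ) : ‖nuM l + 2‖ ≤ ‖l‖ := by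
  have h := norm_sub_one_le_norm_sq_sub_one (re_cpow_one_div_two_nonneg (1 + l))
  rw [one_div, cpow_ofNat_inv_pow, add_sub_cancel_left, ← norm_neg] at h
  rwa [nuM, one_div, show -1 - (1 + l) ^ (2⁻¹ : ℂ) + 2 = -((1 + l) ^ (2⁻¹ : ℂ) - 1) by ring]

theorem norm_mul_exp_sub_neg_two_mul_exp_le {ν : ℂ} (hν : ν.re ≤ -1) {ξ : ℝ} (hξ : 0 ≤ ξ) :
    ‖ν * exp (ν * ξ) - (-2) * exp (-2 * ξ)‖ ≤ 2 * ‖ν + 2‖ * (1 + ξ) * Real.exp (-ξ) := by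
  have hνξ : (ν * ξ).re ≤ -ξ := by simpa using mul_le_mul_of_nonneg_right hν hξ
  have h2ξ : ((-2 : ℂ) * ξ).re ≤ -ξ := by simp; linarith
  have hexp : ‖exp (ν * ξ)‖ ≤ Real.exp (-ξ) := by
    rw [norm_exp]; exact Real.exp_le_exp.2 hνξ
  have hdiff : ‖exp (ν * ξ) - exp (-2 * ξ)‖ ≤ Real.exp (-ξ) * (‖ν + 2‖ * ξ) := by
    convert norm_exp_sub_exp_le_of_re_le hνξ h2ξ using 2
    rw [← sub_mul, sub_neg_eq_add, norm_mul, norm_real, Real.norm_of_nonneg hξ]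
  calc ‖ν * exp (ν * ξ) - (-2) * exp (-2 * ξ)‖
      = ‖(ν + 2) * exp (ν * ξ) + (-2) * (exp (ν * ξ) - exp (-2 * ξ))‖ := by ring_nf
    _ ≤ ‖ν + 2‖ * ‖exp (ν * ξ)‖ + 2 * ‖exp (ν * ξ) - exp (-2 * ξ)‖ := by
      refine (norm_add_le _ _).trans_eq ?_
      rw [norm_mul, norm_mul, norm_neg, norm_ofNat]
    _ ≤ ‖ν + 2‖ * Real.exp (-ξ) + 2 * (Real.exp (-ξ) * (‖ν + 2‖ * ξ)) := by
      gcongr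
    _ ≤ 2 * ‖ν + 2‖ * (1 + ξ) * Real.exp (-ξ) := by
      nlinarith [norm_nonneg (ν + 2), Real.exp_pos (-ξ)]

theorem stmt_18 :
    ∃ C > (0:ℝ), ∃ δ > (0:ℝ), ∀ l : ℂ, ‖l‖ < δ → -(l.im ^ 2) / 4 < l.re →
      ∀ ξ : ℝ, 0 ≤ ξ →
        ‖nuM l * Complex.exp (nuM l * ξ) - (-2) * Complex.exp (-2 * ξ)‖ ≤
          C * ‖l‖ * (1 + ξ) * Real.exp (-ξ) := by
  refine ⟨2, two_pos, 1, one_pos, fun l _ _ ξ hξ => ?_⟩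
  calc _ ≤ 2 * ‖nuM l + 2‖ * (1 + ξ) * Real.exp (-ξ) :=
        norm_mul_exp_sub_neg_two_mul_exp_le (re_nuM_le l) hξ
    _ ≤ 2 * ‖l‖ * (1 + ξ) * Real.exp (-ξ) := by
        gcongr
        exact norm_nuM_add_two_le l
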